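/- arXiv:1611.03745 — 11 statements merged into one kernel-verified Lean document; each statement's English description precedes it below -/
import Mathlib

section
/- For every finite simple graph G = (V,E) on n ≥ 2 vertices and every real α > 0, there exists a set E^s ⊆ E with |E^s| ≤ α·n·log₂ n such that every connected component C of the graph (V, E∖E^s) either consists of a single vertex or, regarded as a graph on its own vertex set, has expansion φ(C) ≥ α. -/
/-- Edges of `G` with one endpoint in `S` and the other endpoint in `U \ S`:
the cut edges `∂(S)` of `S`, inside the subgraph of `G` induced by `U` (when `S ⊆ U`). -/
def cutEdgesIn {V : Type*} (G : SimpleGraph V) (U S : Set V) : Set (Sym2 V) :=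
  {e | e ∈ G.edgeSet ∧ ∃ u v, e = s(u, v) ∧ u ∈ S ∧ v ∈ U ∧ v ∉ S}

/-- `δ(S)`, the number of cut edges of `S` inside the subgraph induced by `U`. -/
noncomputable def deltaIn {V : Type*} (G : SimpleGraph V) (U S : Set V) : ℕ :=
  (cutEdgesIn G U S).ncard

/-- The expansion `φ(S)` of the cut `S` inside the subgraph of `G` induced by `U`. -/
noncomputable def phiIn {V : Type*} (G : SimpleGraph V) (U S : Set V) : ℝ :=
  (deltaIn G U S : ℝ) / min (S.ncard : ℝ) ((U \ S).ncard : ℝ)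

/-!
Repeatedly split along a cut `S ⊆ U` of expansion `< α` until every piece is an `α`-expander,
and delete all edges running between different pieces. Charging each split with the potential
`α · |U| log₂ |U|`, a split of `U` into `S` and `T = U \ S` costs `δ(S) < α · min(|S|, |T|)`
cut edges, and `min(s, t) + s log₂ s + t log₂ t ≤ (s + t) log₂ (s + t)` for `s, t ≥ 1`
(the smaller side at least doubles when passing to `U`), so the potential pays for all of them.
-/

lemma min_add_mul_logb_add_mul_logb_le {a b : ℝ} (ha : 1 ≤ a) (hb : 1 ≤ b) :
    min a b + a * Real.logb 2 a + b * Real.logb 2 b ≤ (a + b) * Real.logb 2 (a + b) := by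
  wlog hab : a ≤ b with H
  · linarith [add_comm a b ▸ min_comm a b ▸ H hb ha (le_of_not_ge hab)]
  have ha0 : 0 < a := one_pos.trans_le ha
  have hlog_two_mul : Real.logb 2 (2 * a) = 1 + Real.logb 2 a := by
    rw [Real.logb_mul two_ne_zero ha0.ne', Real.logb_self_eq_one one_lt_two]
  have h₁ : a * Real.logb 2 (2 * a) ≤ a * Real.logb 2 (a + b) := by
    gcongr
    · norm_num
    · linarith
  have h₂ : b * Real.logb 2 b ≤ b * Real.logb 2 (a + b) := by
    gcongr
    · norm_num
    · linarith
  rw [min_eq_left hab]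
  rw [hlog_two_mul] at h₁
  linarith

section ExpanderDecomposition

variable {V : Type*}

def IsExpander (G : SimpleGraph V) (α : ℝ) (U : Set V) : Prop :=
  ∀ S ⊆ U, S.Nonempty → S ≠ U → α ≤ phiIn G U S

def crossingEdges (G : SimpleGraph V) (U : Set V) (P : Set (Set V)) : Set (Sym2 V) :=
  ⋃ p ∈ P, cutEdgesIn G U p

structure IsExpanderPartition (G : SimpleGraph V) (α : ℝ) (U : Set V) (P : Set (Set V)) :
    Prop where
  pairwiseDisjoint : P.PairwiseDisjoint id
  sUnion_eq : ⋃₀ P = U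
  isExpander : ∀ p ∈ P, IsExpander G α p

section Cuts

variable (G : SimpleGraph V)

lemma cutEdgesIn_subset_edgeSet (U S : Set V) : cutEdgesIn G U S ⊆ G.edgeSet :=
  fun _ he => he.1

lemma cutEdgesIn_self (U : Set V) : cutEdgesIn G U U = ∅ :=
  Set.eq_empty_of_forall_notMem fun _ ⟨_, _, _, _, _, hv, hv'⟩ => hv' hv

lemma cutEdgesIn_nonempty_of_pos_phiIn {U S : Set V} (h : 0 < phiIn G U S) :
    (cutEdgesIn G U S).Nonempty := by
  by_contra hcut
  rw [Set.not_nonempty_iff_eq_empty] at hcut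
  simp [phiIn, deltaIn, hcut] at h

lemma deltaIn_lt_of_phiIn_lt [Finite V] {U S : Set V} {α : ℝ} (hS : S.Nonempty)
    (hUS : (U \ S).Nonempty) (h : phiIn G U S < α) :
    (deltaIn G U S : ℝ) < α * min (S.ncard : ℝ) ((U \ S).ncard : ℝ) := by
  have hS' : (0 : ℝ) < S.ncard := by exact_mod_cast (Set.ncard_pos).2 hS
  have hUS' : (0 : ℝ) < (U \ S).ncard := by exact_mod_cast (Set.ncard_pos).2 hUS
  rwa [phiIn, div_lt_iff₀ (lt_min hS' hUS')] at h

lemma cutEdgesIn_deleteEdges {U S : Set V} {Es : Set (Sym2 V)} (hS : S ⊆ U)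
    (hEs : ∀ ⦃u v⦄, u ∈ U → v ∈ U → s(u, v) ∉ Es) :
    cutEdgesIn (G.deleteEdges Es) U S = cutEdgesIn G U S := by
  ext e
  constructor
  · rintro ⟨he, u, v, rfl, hu, hv, hvS⟩
    exact ⟨(SimpleGraph.edgeSet_deleteEdges Es ▸ he).1, u, v, rfl, hu, hv, hvS⟩
  · rintro ⟨he, u, v, rfl, hu, hv, hvS⟩
    refine ⟨?_, u, v, rfl, hu, hv, hvS⟩
    rw [SimpleGraph.edgeSet_deleteEdges]
    exact ⟨he, hEs (hS hu) hv⟩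

lemma IsExpander.deleteEdges {U : Set V} {α : ℝ} {Es : Set (Sym2 V)} (h : IsExpander G α U)
    (hEs : ∀ ⦃u v⦄, u ∈ U → v ∈ U → s(u, v) ∉ Es) : IsExpander (G.deleteEdges Es) α U := by
  intro S hSU hS hSne
  simpa only [phiIn, deltaIn, cutEdgesIn_deleteEdges G hSU hEs] using h S hSU hS hSne

end Cuts

lemma SimpleGraph.Reachable.mem_of_adj_closed {H : SimpleGraph V} {s : Set V}
    (hs : ∀ ⦃x y⦄, H.Adj x y → x ∈ s → y ∈ s) {u v : V} (h : H.Reachable u v) (hu : u ∈ s) :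
    v ∈ s := by
  obtain ⟨w⟩ := h
  induction w with
  | nil => exact hu
  | cons hadj _ ih => exact ih (hs hadj hu)

lemma SimpleGraph.ConnectedComponent.supp_eq_of_isExpander {H : SimpleGraph V}
    (c : H.ConnectedComponent) {p : Set V} {α : ℝ} {v : V} (hα : 0 < α)
    (hclosed : ∀ ⦃x y⦄, H.Adj x y → x ∈ p → y ∈ p) (hexp : IsExpander H α p)
    (hv : v ∈ c.supp) (hvp : v ∈ p) : c.supp = p := by
  have hsub : c.supp ⊆ p := fun w hw =>
    (c.reachable_of_mem_supp hv hw).mem_of_adj_closed hclosed hvp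
  by_contra hne
  obtain ⟨_, he, u, w, rfl, hu, -, hwc⟩ :=
    cutEdgesIn_nonempty_of_pos_phiIn H (hα.trans_le (hexp c.supp hsub ⟨v, hv⟩ hne))
  exact hwc (c.mem_supp_of_adj_mem_supp hu he)

namespace IsExpanderPartition

variable {G : SimpleGraph V} {α : ℝ} {U : Set V} {P : Set (Set V)}

lemma subset (h : IsExpanderPartition G α U P) {p : Set V} (hp : p ∈ P) : p ⊆ U :=
  h.sUnion_eq ▸ Set.subset_sUnion_of_mem hp

lemma union {S : Set V} {P₁ P₂ : Set (Set V)} (h₁ : IsExpanderPartition G α S P₁)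
    (h₂ : IsExpanderPartition G α (U \ S) P₂) (hSU : S ⊆ U) :
    IsExpanderPartition G α U (P₁ ∪ P₂) where
  pairwiseDisjoint := Set.pairwiseDisjoint_union.2 ⟨h₁.pairwiseDisjoint, h₂.pairwiseDisjoint,
    fun _ hp _ hq _ =>
      Set.disjoint_of_subset (h₁.subset hp) (h₂.subset hq) Set.disjoint_sdiff_right⟩
  sUnion_eq := by rw [Set.sUnion_union, h₁.sUnion_eq, h₂.sUnion_eq, Set.union_sdiff_cancel hSU]
  isExpander := fun p hp => hp.elim (h₁.isExpander p) (h₂.isExpander p)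

lemma crossingEdges_union_subset {S : Set V} {P₁ P₂ : Set (Set V)}
    (h₁ : IsExpanderPartition G α S P₁) (h₂ : IsExpanderPartition G α (U \ S) P₂) :
    crossingEdges G U (P₁ ∪ P₂) ⊆
      cutEdgesIn G U S ∪ crossingEdges G S P₁ ∪ crossingEdges G (U \ S) P₂ := by
  simp only [crossingEdges, Set.subset_def, Set.mem_iUnion, Set.mem_union]
  rintro _ ⟨p, hp | hp, he, u, v, rfl, hu, hv, hvp⟩
  · by_cases hvS : v ∈ S
    · exact Or.inl (Or.inr ⟨p, hp, he, u, v, rfl, hu, hvS, hvp⟩)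
    · exact Or.inl (Or.inl ⟨he, u, v, rfl, h₁.subset hp hu, hv, hvS⟩)
  · by_cases hvS : v ∈ S
    · exact Or.inl (Or.inl ⟨Sym2.eq_swap ▸ he, v, u, Sym2.eq_swap, hvS, (h₂.subset hp hu).1,
        (h₂.subset hp hu).2⟩)
    · exact Or.inr ⟨p, hp, he, u, v, rfl, hu, ⟨hv, hvS⟩, hvp⟩

lemma notMem_crossingEdges (h : IsExpanderPartition G α U P) {p : Set V} (hp : p ∈ P)
    {u v : V} (hu : u ∈ p) (hv : v ∈ p) : s(u, v) ∉ crossingEdges G U P := by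
  simp only [crossingEdges, Set.mem_iUnion]
  rintro ⟨q, hq, -, a, b, hab, ha, -, hbq⟩
  have hmem : ∀ x ∈ s(a, b), x ∈ p := by
    rw [← hab]
    intro x hx
    rcases Sym2.mem_iff.1 hx with rfl | rfl <;> assumption
  have hpq : p = q := h.pairwiseDisjoint.elim_set hp hq a (hmem a (Sym2.mem_mk_left a b)) ha
  exact hbq (hpq ▸ hmem b (Sym2.mem_mk_right a b))

end IsExpanderPartition

lemma mem_of_adj_deleteEdges_crossingEdges (G : SimpleGraph V) {P : Set (Set V)} {p : Set V}
    (hp : p ∈ P) {x y : V} (hxy : (G.deleteEdges (crossingEdges G Set.univ P)).Adj x y)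
    (hx : x ∈ p) : y ∈ p := by
  rw [SimpleGraph.deleteEdges_adj] at hxy
  by_contra hy
  exact hxy.2 (Set.mem_biUnion hp ⟨hxy.1, x, y, rfl, hx, Set.mem_univ y, hy⟩)

theorem exists_isExpanderPartition [Finite V] (G : SimpleGraph V) {α : ℝ} (hα : 0 < α)
    (U : Set V) : ∃ P, IsExpanderPartition G α U P ∧
      ((crossingEdges G U P).ncard : ℝ) ≤ α * U.ncard * Real.logb 2 U.ncard := by
  induction hn : U.ncard using Nat.strong_induction_on generalizing U with
  | _ n ih =>
  subst hn
  by_cases hsparse : ∃ S ⊆ U, S.Nonempty ∧ S ≠ U ∧ phiIn G U S < α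
  · obtain ⟨S, hSU, hS, hSne, hφ⟩ := hsparse
    have hT : (U \ S).Nonempty := Set.sdiff_nonempty.2 fun h => hSne (hSU.antisymm h)
    obtain ⟨P₁, hP₁, hE₁⟩ := ih _ (Set.ncard_lt_ncard (hSU.ssubset_of_ne hSne)) S rfl
    obtain ⟨P₂, hP₂, hE₂⟩ :=
      ih _ (Set.ncard_lt_ncard (hSU.sdiff_ssubset_of_nonempty hS)) _ rfl
    refine ⟨P₁ ∪ P₂, hP₁.union hP₂ hSU, ?_⟩
    have hcross : (crossingEdges G U (P₁ ∪ P₂)).ncard ≤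
        deltaIn G U S + (crossingEdges G S P₁).ncard + (crossingEdges G (U \ S) P₂).ncard :=
      (Set.ncard_le_ncard (hP₁.crossingEdges_union_subset hP₂)).trans
        ((Set.ncard_union_le _ _).trans (Nat.add_le_add_right (Set.ncard_union_le _ _) _))
    have hcard : (S.ncard : ℝ) + (U \ S).ncard = U.ncard := by
      rw [add_comm]
      exact_mod_cast Set.ncard_sdiff_add_ncard_of_subset hSU
    have hsplit := min_add_mul_logb_add_mul_logb_le
      (Nat.one_le_cast.2 ((Set.ncard_pos).2 hS)) (Nat.one_le_cast.2 ((Set.ncard_pos).2 hT))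
    rw [hcard] at hsplit
    calc ((crossingEdges G U (P₁ ∪ P₂)).ncard : ℝ)
        ≤ deltaIn G U S + (crossingEdges G S P₁).ncard
            + (crossingEdges G (U \ S) P₂).ncard := by exact_mod_cast hcross
      _ ≤ α * (min (S.ncard : ℝ) (U \ S).ncard + S.ncard * Real.logb 2 S.ncard
            + (U \ S).ncard * Real.logb 2 (U \ S).ncard) := by
          linarith [deltaIn_lt_of_phiIn_lt G hS hT hφ]
      _ ≤ α * U.ncard * Real.logb 2 U.ncard := by
          rw [mul_assoc]
          exact mul_le_mul_of_nonneg_left hsplit hα.le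
  · push Not at hsparse
    refine ⟨{U}, ⟨Set.pairwiseDisjoint_singleton _ _, Set.sUnion_singleton U, ?_⟩, ?_⟩
    · rintro p rfl S hSU hS hSne
      exact hsparse S hSU hS hSne
    · simp only [crossingEdges, Set.mem_singleton_iff, Set.iUnion_iUnion_eq_left,
        cutEdgesIn_self, Set.ncard_empty, Nat.cast_zero]
      unfold Real.logb
      positivity

end ExpanderDecomposition

theorem stmt1_general {V : Type*} [Fintype V] (G : SimpleGraph V)
    (α : ℝ) (hα : 0 < α) :
    ∃ Es : Set (Sym2 V), Es ⊆ G.edgeSet ∧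
      (Es.ncard : ℝ) ≤ α * (Fintype.card V : ℝ) * Real.logb 2 (Fintype.card V : ℝ) ∧
      ∀ c : (G.deleteEdges Es).ConnectedComponent,
        c.supp.ncard = 1 ∨
        ∀ S : Set V, S ⊆ c.supp → S.Nonempty → S ≠ c.supp →
          α ≤ phiIn (G.deleteEdges Es) c.supp S := by
  obtain ⟨P, hP, hcard⟩ := exists_isExpanderPartition G hα Set.univ
  refine ⟨crossingEdges G Set.univ P,
    Set.iUnion₂_subset fun p _ => cutEdgesIn_subset_edgeSet G _ p,
    by simpa [Set.ncard_univ] using hcard, fun c => Or.inr ?_⟩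
  -- singletons need no separate case: they are vacuously expanders
  obtain ⟨v, hv⟩ := c.nonempty_supp
  obtain ⟨p, hp, hvp⟩ := Set.mem_sUnion.1 (hP.sUnion_eq ▸ Set.mem_univ v)
  have hexp : IsExpander (G.deleteEdges (crossingEdges G Set.univ P)) α p :=
    (hP.isExpander p hp).deleteEdges G fun _ _ hu hv => hP.notMem_crossingEdges hp hu hv
  have hsupp : c.supp = p := c.supp_eq_of_isExpander hα
    (fun _ _ hxy hx => mem_of_adj_deleteEdges_crossingEdges G hp hxy hx) hexp hv hvp
  exact hsupp ▸ hexp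

/-- **expansion decomposition, existence form.**
For every finite simple graph `G` on `n ≥ 2` vertices and every real `α > 0`, there is a set
`Es ⊆ E(G)` with `|Es| ≤ α · n · log₂ n` such that every connected component `C` of `G - Es`
is a singleton or, as a graph on its own vertex set, has expansion at least `α`. -/
theorem stmt1 {V : Type*} [Fintype V] (G : SimpleGraph V)
    (hn : 2 ≤ Fintype.card V) (α : ℝ) (hα : 0 < α) :
    ∃ Es : Set (Sym2 V), Es ⊆ G.edgeSet ∧
      (Es.ncard : ℝ) ≤ α * (Fintype.card V : ℝ) * Real.logb 2 (Fintype.card V : ℝ) ∧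
      ∀ c : (G.deleteEdges Es).ConnectedComponent,
        c.supp.ncard = 1 ∨
        ∀ S : Set V, S ⊆ c.supp → S.Nonempty → S ≠ c.supp →
          α ≤ phiIn (G.deleteEdges Es) c.supp S :=
  stmt1_general G α hα
end

section
/- Let H be a finite simple graph on vertex set V_H and let α > 0. Let S ⊆ V_H be nonempty with |S| < |V_H|/4 and φ_H(S) < α, and let S' be a nonempty subset of V_H∖S with |S'| < |V_H|/4 and φ_{H'}(S') < α, where H' is the subgraph of H induced by V_H∖S. Then φ_H(S ∪ S') < α. -/
/-!
Once `|S|` and `|S'|` are below a quarter of `|V|`, the minimum in each of the three expansions is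
attained by the small side, so `φ < α` just says `δ < α · |side|`. Every edge leaving `S ∪ S'`
leaves `S` in `H` or leaves `S'` in `H[V ∖ S]`, hence
`δ_H(S ∪ S') ≤ δ_H(S) + δ_{H[V∖S]}(S') < α |S| + α |S'| = α |S ∪ S'|`.
-/

open Set

section

variable {V : Type*} (G : SimpleGraph V)

theorem cutEdgesIn_union_subset (U S S' : Set V) :
    cutEdgesIn G U (S ∪ S') ⊆ cutEdgesIn G U S ∪ cutEdgesIn G (U \ S) S' := by
  rintro e ⟨he, u, v, rfl, hu | hu, hvU, hv⟩
  · exact Or.inl ⟨he, u, v, rfl, hu, hvU, fun h => hv (Or.inl h)⟩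
  · exact Or.inr ⟨he, u, v, rfl, hu, ⟨hvU, fun h => hv (Or.inl h)⟩, fun h => hv (Or.inr h)⟩

variable [Finite V]

theorem deltaIn_union_le (U S S' : Set V) :
    deltaIn G U (S ∪ S') ≤ deltaIn G U S + deltaIn G (U \ S) S' :=
  (ncard_le_ncard (cutEdgesIn_union_subset G U S S')).trans (ncard_union_le _ _)

theorem phiIn_eq_of_two_mul_ncard_le {U S : Set V} (hSU : S ⊆ U)
    (hS : 2 * S.ncard ≤ U.ncard) :
    phiIn G U S = deltaIn G U S / S.ncard := by
  have hle : S.ncard ≤ (U \ S).ncard := by rw [ncard_sdiff hSU]; omega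
  rw [phiIn, min_eq_left (by exact_mod_cast hle)]

theorem phiIn_lt_iff {U S : Set V} {α : ℝ} (hSne : S.Nonempty) (hSU : S ⊆ U)
    (hS : 2 * S.ncard ≤ U.ncard) :
    phiIn G U S < α ↔ (deltaIn G U S : ℝ) < α * S.ncard := by
  rw [phiIn_eq_of_two_mul_ncard_le G hSU hS, div_lt_iff₀ (by exact_mod_cast hSne.ncard_pos)]

end

theorem stmt2_general {V : Type*} [Fintype V] (H : SimpleGraph V) (α : ℝ)
    (S S' : Set V)
    (hSne : S.Nonempty) (hSsize : (S.ncard : ℝ) < (Fintype.card V : ℝ) / 4)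
    (hSphi : phiIn H Set.univ S < α)
    (hS'ne : S'.Nonempty) (hS'sub : S' ⊆ Sᶜ)
    (hS'size : (S'.ncard : ℝ) < (Fintype.card V : ℝ) / 4)
    (hS'phi : phiIn H Sᶜ S' < α) :
    phiIn H Set.univ (S ∪ S') < α := by
  have hS4 : 4 * S.ncard < Fintype.card V := by
    exact_mod_cast (by linarith : (4 * S.ncard : ℝ) < Fintype.card V)
  have hS'4 : 4 * S'.ncard < Fintype.card V := by
    exact_mod_cast (by linarith : (4 * S'.ncard : ℝ) < Fintype.card V)
  have huniv : (univ : Set V).ncard = Fintype.card V := by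
    rw [ncard_univ, Nat.card_eq_fintype_card]
  have hcompl : S.ncard + Sᶜ.ncard = Fintype.card V := by
    rw [ncard_add_ncard_compl, Nat.card_eq_fintype_card]
  have hunion : (S ∪ S').ncard = S.ncard + S'.ncard :=
    ncard_union_eq (subset_compl_iff_disjoint_left.mp hS'sub)
  rw [phiIn_lt_iff H hSne (subset_univ S) (by omega)] at hSphi
  rw [phiIn_lt_iff H hS'ne hS'sub (by omega)] at hS'phi
  rw [phiIn_lt_iff H (hSne.mono subset_union_left) (subset_univ _) (by omega), hunion,
    Nat.cast_add, mul_add]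
  calc (deltaIn H univ (S ∪ S') : ℝ) ≤ deltaIn H univ S + deltaIn H Sᶜ S' := by
        exact_mod_cast compl_eq_univ_sdiff S ▸ deltaIn_union_le H univ S S'
    _ < α * S.ncard + α * S'.ncard := add_lt_add hSphi hS'phi

/-- If `S` is a sparse cut of `H` with `|S| < |V|/4` and `S'` is a sparse cut of
the induced subgraph `H[V ∖ S]` with `|S'| < |V|/4`, then `S ∪ S'` is a sparse cut of `H`
(all with sparseness parameter `α`). -/
theorem stmt2 {V : Type*} [Fintype V] (H : SimpleGraph V) (α : ℝ) (hα : 0 < α)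
    (S S' : Set V)
    (hSne : S.Nonempty) (hSsize : (S.ncard : ℝ) < (Fintype.card V : ℝ) / 4)
    (hSphi : phiIn H Set.univ S < α)
    (hS'ne : S'.Nonempty) (hS'sub : S' ⊆ Sᶜ)
    (hS'size : (S'.ncard : ℝ) < (Fintype.card V : ℝ) / 4)
    (hS'phi : phiIn H Sᶜ S' < α) :
    phiIn H Set.univ (S ∪ S') < α :=
  stmt2_general H α S S' hSne hSsize hSphi hS'ne hS'sub hS'size hS'phi
end

section
/- Let G = (V,E) be a finite simple graph, α > 0, and let S₁,…,S_t ⊆ V (t ≥ 1) be pairwise disjoint nonempty sets. For each 1 ≤ i ≤ t let H_i be the subgraph of G induced by V ∖ (S₁ ∪ … ∪ S_{i−1}) (so H₁ = G). If δ_{H_i}(S_i) < α·|S_i| for every i, then δ_G(S₁ ∪ … ∪ S_t) < α·|S₁ ∪ … ∪ S_t|. -/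
open Classical in
lemma ncard_iUnion_le' {ι α : Type*} [Fintype ι] [Fintype α] (A : ι → Set α) :
    (⋃ i, A i).ncard ≤ ∑ i, (A i).ncard := by
  classical
  simp only [Set.ncard_eq_toFinset_card']
  have : (⋃ i, A i).toFinset = Finset.univ.biUnion fun i => (A i).toFinset := by
    ext x; simp
  rw [this]
  exact (Finset.card_biUnion_le).trans (by simp)

open Classical in
lemma ncard_iUnion_eq' {ι α : Type*} [Fintype ι] [Fintype α] (A : ι → Set α)
    (h : Pairwise (Function.onFun Disjoint A)) :
    (⋃ i, A i).ncard = ∑ i, (A i).ncard := by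
  classical
  simp only [Set.ncard_eq_toFinset_card']
  have : (⋃ i, A i).toFinset = Finset.univ.biUnion fun i => (A i).toFinset := by
    ext x; simp
  rw [this, Finset.card_biUnion]
  intro i _ j _ hij
  have := h hij
  rw [Function.onFun, Set.disjoint_iff_inter_eq_empty] at this
  simp [Finset.disjoint_left]
  intro a ha hb
  have : a ∈ A i ∩ A j := ⟨by simpa using ha, by simpa using hb⟩
  simp_all

/-- For pairwise disjoint nonempty sets `S₁, …, S_t ⊆ V` (`t ≥ 1`) and `H_i`
the subgraph of `G` induced by `V ∖ (S₁ ∪ … ∪ S_{i-1})`, if `δ_{H_i}(S_i) < α·|S_i|` for every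
`i`, then `δ_G(S₁ ∪ … ∪ S_t) < α·|S₁ ∪ … ∪ S_t|`. -/
theorem stmt4 {V : Type*} [Fintype V] (G : SimpleGraph V) (α : ℝ) (hα : 0 < α)
    (t : ℕ) (ht : 1 ≤ t) (S : Fin t → Set V)
    (hdisj : Pairwise (Function.onFun Disjoint S))
    (hne : ∀ i, (S i).Nonempty)
    (hcut : ∀ i : Fin t,
      (deltaIn G (⋃ j < i, S j)ᶜ (S i) : ℝ) < α * ((S i).ncard : ℝ)) :
    (deltaIn G Set.univ (⋃ i, S i) : ℝ) < α * ((⋃ i, S i).ncard : ℝ) := by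
  classical
  haveI : Nonempty (Fin t) := Fin.pos_iff_nonempty.mp ht
  have hsub : cutEdgesIn G Set.univ (⋃ i, S i) ⊆
      ⋃ i, cutEdgesIn G (⋃ j < i, S j)ᶜ (S i) := by
    rintro e ⟨he, u, v, heq, hu, -, hv⟩
    obtain ⟨i, hui⟩ := Set.mem_iUnion.mp hu
    refine Set.mem_iUnion.mpr ⟨i, he, u, v, heq, hui, ?_, ?_⟩
    · simp only [Set.mem_compl_iff, Set.mem_iUnion]
      rintro ⟨j, -, hvj⟩
      exact hv (Set.mem_iUnion.mpr ⟨j, hvj⟩)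
    · exact fun h => hv (Set.mem_iUnion.mpr ⟨i, h⟩)
  have h1 : deltaIn G Set.univ (⋃ i, S i) ≤ ∑ i, deltaIn G (⋃ j < i, S j)ᶜ (S i) := by
    refine le_trans (Set.ncard_le_ncard hsub (Set.toFinite _)) ?_
    exact ncard_iUnion_le' _
  calc (deltaIn G Set.univ (⋃ i, S i) : ℝ)
      ≤ ∑ i, (deltaIn G (⋃ j < i, S j)ᶜ (S i) : ℝ) := by exact_mod_cast h1
    _ < ∑ i, α * ((S i).ncard : ℝ) :=
        Finset.sum_lt_sum_of_nonempty Finset.univ_nonempty fun i _ => hcut i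
    _ = α * ((⋃ i, S i).ncard : ℝ) := by
        rw [ncard_iUnion_eq' S hdisj, ← Finset.mul_sum]
        push_cast; ring
end

section
/- Let G_b = (V,E_b) be a finite simple graph with maximum degree at most 3 and expansion φ(G_b) ≥ α_b for some α_b > 0. Let D ⊆ E_b, let A be the set of endpoints of edges in D, and let G = (V, E_b∖D). Then for every α' < α_b/2, every nonempty S ⊆ V with |S| ≤ |V∖S| and φ_G(S) < α' satisfies |S| ≤ 4|A|/α_b. -/
section Cuts

variable {V : Type*} (G : SimpleGraph V)

theorem two_mul_ncard_le_mul_ncard_endpoints [Fintype V] {d : ℕ}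
    (hdeg : ∀ v, (G.neighborSet v).ncard ≤ d) {C : Set (Sym2 V)} (hC : C ⊆ G.edgeSet) :
    2 * C.ncard ≤ d * {v : V | ∃ e ∈ C, v ∈ e}.ncard := by
  classical
  set A : Set V := {v : V | ∃ e ∈ C, v ∈ e}
  rw [Set.ncard_eq_toFinset_card' C, Set.ncard_eq_toFinset_card' A, mul_comm 2, mul_comm d]
  refine Finset.card_mul_le_card_mul (fun e v => v ∈ e) ?endpoints ?incident
  case endpoints =>
    intro e he
    rw [Set.mem_toFinset] at he
    induction e using Sym2.ind with
    | h u v =>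
      have hsub : ({u, v} : Finset V) ⊆ A.toFinset.bipartiteAbove (fun e v => v ∈ e) s(u, v) := by
        intro x hx
        rw [Finset.bipartiteAbove, Finset.mem_filter, Set.mem_toFinset]
        rcases Finset.mem_insert.mp hx with rfl | hx
        · exact ⟨⟨_, he, Sym2.mem_mk_left x v⟩, Sym2.mem_mk_left x v⟩
        · rw [Finset.mem_singleton.mp hx]
          exact ⟨⟨_, he, Sym2.mem_mk_right u v⟩, Sym2.mem_mk_right u v⟩
      calc 2 = ({u, v} : Finset V).card := (Finset.card_pair (G.ne_of_adj (hC he))).symm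
        _ ≤ _ := Finset.card_le_card hsub
  case incident =>
    intro v _
    have hsub : C.toFinset.bipartiteBelow (fun e v => v ∈ e) v ⊆
        (G.neighborFinset v).image (fun w => s(v, w)) := by
      intro e he
      rw [Finset.bipartiteBelow, Finset.mem_filter, Set.mem_toFinset] at he
      obtain ⟨heC, hve⟩ := he
      obtain ⟨w, rfl⟩ := Sym2.mem_iff_exists.mp hve
      exact Finset.mem_image.mpr ⟨w, (G.mem_neighborFinset v w).mpr (hC heC), rfl⟩
    calc (C.toFinset.bipartiteBelow (fun e v => v ∈ e) v).card
        ≤ ((G.neighborFinset v).image (fun w => s(v, w))).card := Finset.card_le_card hsub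
      _ ≤ (G.neighborFinset v).card := Finset.card_image_le
      _ ≤ d := by rw [SimpleGraph.neighborFinset_def, ← Set.ncard_eq_toFinset_card']; exact hdeg v

theorem cutEdgesIn_subset_deleteEdges_union (U S : Set V) (D : Set (Sym2 V)) :
    cutEdgesIn G U S ⊆ cutEdgesIn (G.deleteEdges D) U S ∪ D := by
  rintro e ⟨heE, hcut⟩
  by_cases heD : e ∈ D
  · exact Or.inr heD
  · exact Or.inl ⟨by rw [SimpleGraph.edgeSet_deleteEdges]; exact ⟨heE, heD⟩, hcut⟩

theorem deltaIn_le_deltaIn_deleteEdges_add [Finite V] (U S : Set V) (D : Set (Sym2 V)) :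
    deltaIn G U S ≤ deltaIn (G.deleteEdges D) U S + D.ncard :=
  (Set.ncard_le_ncard (cutEdgesIn_subset_deleteEdges_union G U S D)).trans
    (Set.ncard_union_le _ _)

theorem phiIn_univ_mul_ncard [Finite V] {S : Set V} (hSne : S.Nonempty)
    (hSsize : S.ncard ≤ Sᶜ.ncard) :
    phiIn G Set.univ S * S.ncard = deltaIn G Set.univ S := by
  have hSpos : (0 : ℝ) < S.ncard := by exact_mod_cast (Set.ncard_pos S.toFinite).mpr hSne
  rw [phiIn, ← Set.compl_eq_univ_sdiff, min_eq_left (by exact_mod_cast hSsize),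
    div_mul_cancel₀ _ hSpos.ne']

end Cuts

/-- Let `G_b` have maximum degree ≤ 3 and expansion `φ(G_b) ≥ α_b > 0`,
let `D ⊆ E_b`, `A` the set of endpoints of edges of `D`, and `G = (V, E_b ∖ D)`. Then for
every `α' < α_b/2`, every nonempty `S` with `|S| ≤ |V ∖ S|` and `φ_G(S) < α'` satisfies
`|S| ≤ 4|A|/α_b`. -/
theorem stmt5 {V : Type*} [Fintype V] (Gb : SimpleGraph V) (αb : ℝ) (hαb : 0 < αb)
    (hdeg : ∀ v : V, (Gb.neighborSet v).ncard ≤ 3)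
    (hexp : ∀ S : Set V, S.Nonempty → S ≠ Set.univ → αb ≤ phiIn Gb Set.univ S)
    (D : Set (Sym2 V)) (hD : D ⊆ Gb.edgeSet)
    (α' : ℝ) (hα' : α' < αb / 2)
    (S : Set V) (hSne : S.Nonempty) (hSsize : S.ncard ≤ Sᶜ.ncard)
    (hSphi : phiIn (Gb.deleteEdges D) Set.univ S < α') :
    (S.ncard : ℝ) ≤ 4 * ({v : V | ∃ e ∈ D, v ∈ e}.ncard : ℝ) / αb := by
  have hSpos : (0 : ℝ) < S.ncard := by exact_mod_cast (Set.ncard_pos S.toFinite).mpr hSne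
  have hSne_univ : S ≠ Set.univ := by
    rintro rfl
    rw [Set.compl_univ, Set.ncard_empty] at hSsize
    have := (Set.ncard_pos Set.univ.toFinite).mpr hSne
    omega
  have hGb : αb * S.ncard ≤ deltaIn Gb Set.univ S := by
    rw [← phiIn_univ_mul_ncard Gb hSne hSsize]
    exact mul_le_mul_of_nonneg_right (hexp S hSne hSne_univ) hSpos.le
  have hG : (deltaIn (Gb.deleteEdges D) Set.univ S : ℝ) < αb / 2 * S.ncard := by
    rw [← phiIn_univ_mul_ncard _ hSne hSsize]
    exact mul_lt_mul_of_pos_right (hSphi.trans hα') hSpos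
  have hsplit : (deltaIn Gb Set.univ S : ℝ) ≤ deltaIn (Gb.deleteEdges D) Set.univ S + D.ncard := by
    exact_mod_cast deltaIn_le_deltaIn_deleteEdges_add Gb Set.univ S D
  have hD_le : 2 * (D.ncard : ℝ) ≤ 3 * {v : V | ∃ e ∈ D, v ∈ e}.ncard := by
    exact_mod_cast two_mul_ncard_le_mul_ncard_endpoints Gb hdeg hD
  rw [le_div_iff₀ hαb]
  linarith
end

section
/- Let G_b = (V,E_b) be a finite simple graph with maximum degree at most Δ, let D ⊆ E_b, let A be the set of endpoints of edges in D, and let G = (V, E_b∖D). Let V_H ⊆ V, let H = G[V_H] be the subgraph of G induced by V_H, and let A_H be the set of endpoints of edges in ∂_G(V_H). Then for every S ⊆ V_H: δ_{G_b}(S) ≤ δ_H(S) + Δ·|S ∩ (A ∪ A_H)|. -/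
namespace SimpleGraph

variable {V : Type*}

theorem ncard_incidenceSet_eq_ncard_neighborSet (G : SimpleGraph V) (v : V) :
    (G.incidenceSet v).ncard = (G.neighborSet v).ncard := by
  classical exact Set.ncard_congr' (G.incidenceSetEquivNeighborSet v)

theorem ncard_biUnion_incidenceSet_le (G : SimpleGraph V) {Δ : ℕ}
    (hdeg : ∀ v : V, (G.neighborSet v).ncard ≤ Δ) {T : Set V} (hT : T.Finite) :
    (⋃ u ∈ T, G.incidenceSet u).ncard ≤ Δ * T.ncard := by
  calc (⋃ u ∈ T, G.incidenceSet u).ncard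
      = (⋃ u ∈ hT.toFinset, G.incidenceSet u).ncard := by simp only [Set.Finite.mem_toFinset]
    _ ≤ ∑ u ∈ hT.toFinset, (G.incidenceSet u).ncard := Finset.set_ncard_biUnion_le _ _
    _ ≤ hT.toFinset.card • Δ := Finset.sum_le_card_nsmul _ _ _ fun u _ =>
        (G.ncard_incidenceSet_eq_ncard_neighborSet u).trans_le (hdeg u)
    _ = Δ * T.ncard := by rw [smul_eq_mul, mul_comm, Set.ncard_eq_toFinset_card T hT]

end SimpleGraph

def endpoints {V : Type*} (F : Set (Sym2 V)) : Set V := {v | ∃ e ∈ F, v ∈ e}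

theorem cutEdgesIn_univ_subset {V : Type*} (G : SimpleGraph V) (D : Set (Sym2 V)) {U S : Set V}
    (hS : S ⊆ U) :
    cutEdgesIn G Set.univ S ⊆ cutEdgesIn (G.deleteEdges D) U S ∪
      ⋃ u ∈ S ∩ (endpoints D ∪ endpoints (cutEdgesIn (G.deleteEdges D) Set.univ U)),
        G.incidenceSet u := by
  rintro e ⟨he, u, v, rfl, hu, -, hv⟩
  have incident (hu' : u ∈ endpoints D ∪ endpoints (cutEdgesIn (G.deleteEdges D) Set.univ U)) :
      s(u, v) ∈ ⋃ u ∈ S ∩ (endpoints D ∪ endpoints (cutEdgesIn (G.deleteEdges D) Set.univ U)),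
        G.incidenceSet u :=
    Set.mem_biUnion ⟨hu, hu'⟩ ⟨he, Sym2.mem_mk_left u v⟩
  by_cases heD : s(u, v) ∈ D
  · exact Or.inr (incident (Or.inl ⟨_, heD, Sym2.mem_mk_left u v⟩))
  have heG : s(u, v) ∈ (G.deleteEdges D).edgeSet := by
    rw [SimpleGraph.edgeSet_deleteEdges]; exact ⟨he, heD⟩
  by_cases hvU : v ∈ U
  · exact Or.inl ⟨heG, u, v, rfl, hu, hvU, hv⟩
  · exact Or.inr (incident (Or.inr ⟨_, ⟨heG, u, v, rfl, hS hu, trivial, hvU⟩, Sym2.mem_mk_left u v⟩))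

theorem stmt6_general {V : Type*} [Fintype V] (Gb : SimpleGraph V) (Δ : ℕ)
    (hdeg : ∀ v : V, (Gb.neighborSet v).ncard ≤ Δ)
    (D : Set (Sym2 V))
    (VH S : Set V) (hS : S ⊆ VH) :
    deltaIn Gb Set.univ S ≤
      deltaIn (Gb.deleteEdges D) VH S +
        Δ * (S ∩ ({v : V | ∃ e ∈ D, v ∈ e} ∪
          {v : V | ∃ e ∈ cutEdgesIn (Gb.deleteEdges D) Set.univ VH, v ∈ e})).ncard := by
  set T := S ∩ (endpoints D ∪ endpoints (cutEdgesIn (Gb.deleteEdges D) Set.univ VH))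
  calc deltaIn Gb Set.univ S
      ≤ (cutEdgesIn (Gb.deleteEdges D) VH S ∪ ⋃ u ∈ T, Gb.incidenceSet u).ncard :=
        Set.ncard_le_ncard (cutEdgesIn_univ_subset Gb D hS) (Set.toFinite _)
    _ ≤ deltaIn (Gb.deleteEdges D) VH S + (⋃ u ∈ T, Gb.incidenceSet u).ncard :=
        Set.ncard_union_le _ _
    _ ≤ deltaIn (Gb.deleteEdges D) VH S + Δ * T.ncard :=
        Nat.add_le_add_left (Gb.ncard_biUnion_incidenceSet_le hdeg (Set.toFinite T)) _

/-- Let `G_b` have maximum degree ≤ `Δ`, `D ⊆ E_b`, `A` the endpoints of `D`,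
`G = (V, E_b ∖ D)`, `H = G[V_H]` the induced subgraph, `A_H` the endpoints of `∂_G(V_H)`.
Then for every `S ⊆ V_H`: `δ_{G_b}(S) ≤ δ_H(S) + Δ·|S ∩ (A ∪ A_H)|`. -/
theorem stmt6 {V : Type*} [Fintype V] (Gb : SimpleGraph V) (Δ : ℕ)
    (hdeg : ∀ v : V, (Gb.neighborSet v).ncard ≤ Δ)
    (D : Set (Sym2 V)) (hD : D ⊆ Gb.edgeSet)
    (VH S : Set V) (hS : S ⊆ VH) :
    deltaIn Gb Set.univ S ≤
      deltaIn (Gb.deleteEdges D) VH S +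
        Δ * (S ∩ ({v : V | ∃ e ∈ D, v ∈ e} ∪
          {v : V | ∃ e ∈ cutEdgesIn (Gb.deleteEdges D) Set.univ VH, v ∈ e})).ncard :=
  stmt6_general Gb Δ hdeg D VH S hS
end

section
/- Let G = (V,E) be a finite simple graph, let A ⊊ V be a set with 4|A| ≤ |V∖A|, let α > 0, let σ be a real with 3|A|/|V∖A| ≤ σ ≤ 3/4, set ε_σ = σ/(3(1−σ)), and let c ≥ 0 be a real. Suppose that for every S ⊆ V it holds that δ_G(S)/α + |A∖S| + ε_σ·|S∖A| ≥ |A| − c. Then every nonempty proper subset S ⊊ V that is (A,σ)-overlapping and satisfies |S| ≥ 3c/σ has expansion φ_G(S) ≥ (σ/3)·α. -/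
theorem phiIn_nonneg {V : Type*} (G : SimpleGraph V) (U S : Set V) : 0 ≤ phiIn G U S := by
  unfold phiIn
  positivity

theorem le_phiIn_of_mul_ncard_le_deltaIn {V : Type*} [Finite V] (G : SimpleGraph V)
    {U S : Set V} (hS : S.Nonempty) (hUS : (U \ S).Nonempty) {κ : ℝ} (hκ : 0 ≤ κ)
    (hδ : κ * S.ncard ≤ deltaIn G U S) : κ ≤ phiIn G U S := by
  have hSpos : (0 : ℝ) < S.ncard := by exact_mod_cast (Set.ncard_pos S.toFinite).mpr hS
  have hUSpos : (0 : ℝ) < (U \ S).ncard := by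
    exact_mod_cast (Set.ncard_pos (U \ S).toFinite).mpr hUS
  unfold phiIn
  rw [le_div_iff₀ (lt_min hSpos hUSpos)]
  calc κ * min (S.ncard : ℝ) (U \ S).ncard ≤ κ * S.ncard := by gcongr; exact min_le_left _ _
    _ ≤ deltaIn G U S := hδ

/-- In the capacity of the cut `S`, the overlap bound `|S ∖ A| ≤ (1 - σ)|S|` makes the sink term
at most `σ|S|/3`, and `c ≤ σ|S|/3`; what is left of `|S ∩ A| ≥ σ|S|` must be paid by `δ(S)/α`. -/
theorem mul_ncard_le_deltaIn_of_capacity {V : Type*} [Finite V] (G : SimpleGraph V)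
    (A S : Set V) {α σ c : ℝ} (hα : 0 < α) (hσ0 : 0 < σ) (hσ1 : σ < 1)
    (hcap : (A.ncard : ℝ) - c ≤
      (deltaIn G Set.univ S : ℝ) / α + ((A \ S).ncard : ℝ) +
        (σ / (3 * (1 - σ))) * ((S \ A).ncard : ℝ))
    (hover : σ * (S.ncard : ℝ) ≤ ((S ∩ A).ncard : ℝ)) (hc : 3 * c ≤ σ * S.ncard) :
    σ / 3 * α * S.ncard ≤ deltaIn G Set.univ S := by
  have hA : ((S ∩ A).ncard : ℝ) + (A \ S).ncard = A.ncard := by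
    rw [Set.inter_comm]
    exact_mod_cast Set.ncard_inter_add_ncard_sdiff_eq_ncard A S A.toFinite
  have hS : ((S ∩ A).ncard : ℝ) + (S \ A).ncard = S.ncard := by
    exact_mod_cast Set.ncard_inter_add_ncard_sdiff_eq_ncard S A S.toFinite
  have hsink : σ / (3 * (1 - σ)) * (S \ A).ncard ≤ σ / 3 * S.ncard := by
    have h1σ : 0 < 1 - σ := by linarith
    calc σ / (3 * (1 - σ)) * (S \ A).ncard ≤ σ / (3 * (1 - σ)) * ((1 - σ) * S.ncard) := by
          gcongr; linarith
      _ = σ / 3 * S.ncard := by field_simp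
  have hδα : σ / 3 * S.ncard ≤ (deltaIn G Set.univ S : ℝ) / α := by linarith
  calc σ / 3 * α * S.ncard = σ / 3 * S.ncard * α := by ring
    _ ≤ deltaIn G Set.univ S := (le_div_iff₀ hα).mp hδα

theorem stmt8_general {V : Type*} [Fintype V] (G : SimpleGraph V) (A : Set V)
    (α : ℝ) (hα : 0 < α) (σ : ℝ)
    (hσ1 : 3 * (A.ncard : ℝ) / (Aᶜ.ncard : ℝ) ≤ σ) (hσ2 : σ ≤ 3 / 4)
    (c : ℝ)
    (hcap : ∀ S : Set V,
      (A.ncard : ℝ) - c ≤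
        (deltaIn G Set.univ S : ℝ) / α + ((A \ S).ncard : ℝ) +
          (σ / (3 * (1 - σ))) * ((S \ A).ncard : ℝ))
    (S : Set V) (hSne : S.Nonempty) (hSuniv : S ≠ Set.univ)
    (hover : σ * (S.ncard : ℝ) ≤ ((S ∩ A).ncard : ℝ))
    (hsize : 3 * c / σ ≤ (S.ncard : ℝ)) :
    (σ / 3) * α ≤ phiIn G Set.univ S := by
  have hσ0 : 0 ≤ σ := le_trans (by positivity) hσ1
  rcases hσ0.eq_or_lt with rfl | hσpos
  · simpa using phiIn_nonneg G Set.univ S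
  have hcomp : (Set.univ \ S).Nonempty := by
    rwa [← Set.compl_eq_univ_sdiff, Set.nonempty_compl]
  have hc : 3 * c ≤ σ * S.ncard := by
    rw [div_le_iff₀ hσpos] at hsize
    linarith
  exact le_phiIn_of_mul_ncard_le_deltaIn G hSne hcomp (by positivity)
    (mul_ncard_le_deltaIn_of_capacity G A S hα hσpos (by linarith) (hcap S) hover hc)

/-- With `A ⊊ V`, `4|A| ≤ |V ∖ A|`, `α > 0`, `3|A|/|V∖A| ≤ σ ≤ 3/4`,
`ε_σ = σ/(3(1−σ))` and `c ≥ 0`, if every `S ⊆ V` satisfies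
`δ_G(S)/α + |A∖S| + ε_σ·|S∖A| ≥ |A| − c` (every cut of the augmented graph has capacity at
least the max-flow value `|A| − c`), then every nonempty proper `(A,σ)`-overlapping cut `S`
with `|S| ≥ 3c/σ` has expansion `φ_G(S) ≥ (σ/3)·α`. -/
theorem stmt8 {V : Type*} [Fintype V] (G : SimpleGraph V) (A : Set V)
    (hAproper : A ≠ Set.univ) (hA : 4 * A.ncard ≤ Aᶜ.ncard)
    (α : ℝ) (hα : 0 < α) (σ : ℝ)
    (hσ1 : 3 * (A.ncard : ℝ) / (Aᶜ.ncard : ℝ) ≤ σ) (hσ2 : σ ≤ 3 / 4)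
    (c : ℝ) (hc : 0 ≤ c)
    (hcap : ∀ S : Set V,
      (A.ncard : ℝ) - c ≤
        (deltaIn G Set.univ S : ℝ) / α + ((A \ S).ncard : ℝ) +
          (σ / (3 * (1 - σ))) * ((S \ A).ncard : ℝ))
    (S : Set V) (hSne : S.Nonempty) (hSuniv : S ≠ Set.univ)
    (hover : σ * (S.ncard : ℝ) ≤ ((S ∩ A).ncard : ℝ))
    (hsize : 3 * c / σ ≤ (S.ncard : ℝ)) :
    (σ / 3) * α ≤ phiIn G Set.univ S :=
  stmt8_general G A α hα σ hσ1 hσ2 c hcap S hSne hSuniv hover hsize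
end

section
/- Let G = (V,E) be a finite simple graph, let A ⊊ V be a nonempty set with 4|A| ≤ |V∖A|, let α > 0, let σ be a real with 3|A|/|V∖A| ≤ σ ≤ 3/4, set ε_σ = σ/(3(1−σ)), and let c > 0 be a real. Suppose S' ⊆ V satisfies δ_G(S')/α + |A∖S'| + ε_σ·|S'∖A| = |A| − c. Then ∅ ≠ S' ⊊ V and φ_G(S') < α, i.e. S' is an α-sparse cut of G. -/
/-!
Let `S` be a cut of capacity below `|A|` in the augmented graph. Since `|A| = |A ∩ S| + |A ∖ S|`,
the cut edges satisfy `δ(S)/α < |A ∩ S| ≤ |S|`. On the other side, `3|A| ≤ σ|V ∖ A|` gives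
`|A| ≤ ε |V ∖ A|` and `σ ≤ 3/4` gives `ε ≤ 1`, so the sink edges of `V ∖ A` outside `S` pay for
the rest: `δ(S)/α < ε |(V ∖ A) ∖ S| ≤ |V ∖ S|`. Thus `δ(S)/α < min(|S|, |V ∖ S|)`, which is
`φ(S) < α` and forces both sides of the cut to be nonempty.
-/

/-- Capacity of the `s`–`t` cut `S` in the augmented graph `G_A(α, σ)` with sink capacity `ε`. -/
noncomputable def cutCapacity {V : Type*} (G : SimpleGraph V) (A : Set V) (α ε : ℝ)
    (S : Set V) : ℝ :=
  (deltaIn G Set.univ S : ℝ) / α + ((A \ S).ncard : ℝ) + ε * ((S \ A).ncard : ℝ)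

section CutCapacity

variable {V : Type*} [Finite V] (G : SimpleGraph V) {A S : Set V} {α ε : ℝ}

theorem deltaIn_div_lt_ncard_of_cutCapacity_lt (hε : 0 ≤ ε)
    (h : cutCapacity G A α ε S < A.ncard) :
    (deltaIn G Set.univ S : ℝ) / α < S.ncard := by
  have hA : ((A ∩ S).ncard : ℝ) + (A \ S).ncard = A.ncard := by
    exact_mod_cast Set.ncard_inter_add_ncard_sdiff_eq_ncard A S
  have hAS : ((A ∩ S).ncard : ℝ) ≤ S.ncard := by
    exact_mod_cast Set.ncard_le_ncard Set.inter_subset_right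
  have hε' : 0 ≤ ε * ((S \ A).ncard : ℝ) := by positivity
  unfold cutCapacity at h
  linarith

theorem deltaIn_div_lt_ncard_compl_of_cutCapacity_lt (hε : ε ≤ 1)
    (hAε : (A.ncard : ℝ) ≤ ε * Aᶜ.ncard) (h : cutCapacity G A α ε S < A.ncard) :
    (deltaIn G Set.univ S : ℝ) / α < Sᶜ.ncard := by
  have hAc : ((S \ A).ncard : ℝ) + (Aᶜ \ S).ncard = Aᶜ.ncard := by
    rw [Set.sdiff_eq_compl_inter]
    exact_mod_cast Set.ncard_inter_add_ncard_sdiff_eq_ncard Aᶜ S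
  have hSc : ((A \ S).ncard : ℝ) + (Aᶜ \ S).ncard = Sᶜ.ncard := by
    have h := Set.ncard_inter_add_ncard_sdiff_eq_ncard Sᶜ A
    rw [Set.inter_comm, ← Set.sdiff_eq, Set.sdiff_eq_compl_inter, Set.sdiff_eq_compl_inter,
      Set.inter_comm] at h
    exact_mod_cast h
  have hr : ε * ((Aᶜ \ S).ncard : ℝ) ≤ (Aᶜ \ S).ncard :=
    mul_le_of_le_one_left (Nat.cast_nonneg _) hε
  rw [← hAc, mul_add] at hAε
  unfold cutCapacity at h
  linarith [(Nat.cast_nonneg _ : (0 : ℝ) ≤ (A \ S).ncard)]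

end CutCapacity

theorem phiIn_lt_of_deltaIn_div_lt_min {V : Type*} (G : SimpleGraph V) {U S : Set V} {α : ℝ}
    (hα : 0 < α) (h : (deltaIn G U S : ℝ) / α < min (S.ncard : ℝ) ((U \ S).ncard : ℝ)) :
    phiIn G U S < α := by
  have hmin : 0 < min (S.ncard : ℝ) ((U \ S).ncard : ℝ) :=
    (div_nonneg (Nat.cast_nonneg _) hα.le).trans_lt h
  rw [phiIn, div_lt_iff₀ hmin]
  rwa [div_lt_iff₀ hα, mul_comm] at h

theorem sparse_cut_of_deltaIn_div_lt_min {V : Type*} [Finite V] (G : SimpleGraph V)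
    {S : Set V} {α : ℝ} (hα : 0 < α)
    (h : (deltaIn G Set.univ S : ℝ) / α < min (S.ncard : ℝ) ((Set.univ \ S).ncard : ℝ)) :
    S.Nonempty ∧ S ≠ Set.univ ∧ phiIn G Set.univ S < α := by
  have hmin : 0 < min (S.ncard : ℝ) ((Set.univ \ S).ncard : ℝ) :=
    (div_nonneg (Nat.cast_nonneg _) hα.le).trans_lt h
  have hS : 0 < S.ncard := by exact_mod_cast hmin.trans_le (min_le_left _ _)
  have hSc : 0 < Sᶜ.ncard := by
    rw [Set.compl_eq_univ_sdiff]
    exact_mod_cast hmin.trans_le (min_le_right _ _)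
  exact ⟨Set.nonempty_of_ncard_ne_zero hS.ne',
    Set.nonempty_compl.mp (Set.nonempty_of_ncard_ne_zero hSc.ne'),
    phiIn_lt_of_deltaIn_div_lt_min G hα h⟩

theorem div_le_div_three_mul_one_sub {σ : ℝ} (hσ0 : 0 ≤ σ) (hσ1 : σ < 1) :
    σ / 3 ≤ σ / (3 * (1 - σ)) :=
  div_le_div_of_nonneg_left hσ0 (by linarith) (by linarith)

theorem div_three_mul_one_sub_le_one {σ : ℝ} (hσ : σ ≤ 3 / 4) : σ / (3 * (1 - σ)) ≤ 1 := by
  rw [div_le_one (by linarith)]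
  linarith

theorem stmt9_general {V : Type*} [Fintype V] (G : SimpleGraph V) (A : Set V)
    (hAproper : A ≠ Set.univ)
    (α : ℝ) (hα : 0 < α) (σ : ℝ)
    (hσ1 : 3 * (A.ncard : ℝ) / (Aᶜ.ncard : ℝ) ≤ σ) (hσ2 : σ ≤ 3 / 4)
    (c : ℝ) (hc : 0 < c)
    (S' : Set V)
    (heq : (deltaIn G Set.univ S' : ℝ) / α + ((A \ S').ncard : ℝ) +
        (σ / (3 * (1 - σ))) * ((S' \ A).ncard : ℝ) = (A.ncard : ℝ) - c) :
    S'.Nonempty ∧ S' ≠ Set.univ ∧ phiIn G Set.univ S' < α := by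
  set ε := σ / (3 * (1 - σ))
  have hAc : (0 : ℝ) < Aᶜ.ncard := by
    exact_mod_cast (Set.nonempty_compl.mpr hAproper).ncard_pos
  have hσ0 : 0 ≤ σ := (by positivity : (0 : ℝ) ≤ 3 * A.ncard / Aᶜ.ncard).trans hσ1
  have hε0 : 0 ≤ ε := div_nonneg hσ0 (by linarith)
  have hAε : (A.ncard : ℝ) ≤ ε * Aᶜ.ncard :=
    calc (A.ncard : ℝ) ≤ σ / 3 * Aᶜ.ncard := by
          rw [div_le_iff₀ hAc] at hσ1
          linarith
      _ ≤ ε * Aᶜ.ncard := by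
          gcongr
          exact div_le_div_three_mul_one_sub hσ0 (by linarith)
  have hcap : cutCapacity G A α ε S' < A.ncard := by
    rw [cutCapacity, heq]
    linarith
  refine sparse_cut_of_deltaIn_div_lt_min G hα (lt_min ?_ ?_)
  · exact deltaIn_div_lt_ncard_of_cutCapacity_lt G hε0 hcap
  · rw [← Set.compl_eq_univ_sdiff]
    exact deltaIn_div_lt_ncard_compl_of_cutCapacity_lt G
      (div_three_mul_one_sub_le_one hσ2) hAε hcap

/-- With `∅ ≠ A ⊊ V`, `4|A| ≤ |V ∖ A|`, `α > 0`, `3|A|/|V∖A| ≤ σ ≤ 3/4`,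
`ε_σ = σ/(3(1−σ))` and `c > 0`, if `S'` satisfies
`δ_G(S')/α + |A∖S'| + ε_σ·|S'∖A| = |A| − c` (a minimum cut of the augmented graph whose
capacity is the max-flow value `|A| − c`), then `S'` is a nonempty proper `α`-sparse cut. -/
theorem stmt9 {V : Type*} [Fintype V] (G : SimpleGraph V) (A : Set V)
    (hAne : A.Nonempty) (hAproper : A ≠ Set.univ) (hA : 4 * A.ncard ≤ Aᶜ.ncard)
    (α : ℝ) (hα : 0 < α) (σ : ℝ)
    (hσ1 : 3 * (A.ncard : ℝ) / (Aᶜ.ncard : ℝ) ≤ σ) (hσ2 : σ ≤ 3 / 4)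
    (c : ℝ) (hc : 0 < c)
    (S' : Set V)
    (heq : (deltaIn G Set.univ S' : ℝ) / α + ((A \ S').ncard : ℝ) +
        (σ / (3 * (1 - σ))) * ((S' \ A).ncard : ℝ) = (A.ncard : ℝ) - c) :
    S'.Nonempty ∧ S' ≠ Set.univ ∧ phiIn G Set.univ S' < α :=
  stmt9_general G A hAproper α hα σ hσ1 hσ2 c hc S' heq
end

section
/- Let G = (V,E) be a finite simple graph, let A ⊊ V be a nonempty set with 4|A| ≤ |V∖A|, let α > 0, let σ be a real with 3|A|/|V∖A| ≤ σ ≤ 3/4, set ε_σ = σ/(3(1−σ)), and let c > 0 be a real. Suppose S' ⊆ V satisfies δ_G(S')/α + |A∖S'| + ε_σ·|S'∖A| = |A| − c. Then |S'| ≥ c and |V∖S'| ≥ c. -/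
/-!
All three terms on the left of the cut equation are nonnegative. Hence `|A ∖ S'| ≤ |A| - c`,
and `|S'| ≥ |A| - |A ∖ S'| ≥ c`. Likewise `ε_σ |S' ∖ A| ≤ |A| - c`, while `σ ≥ 3|A|/|V ∖ A|`
makes `|A| ≤ ε_σ |V ∖ A|`; since `V ∖ A ⊆ (V ∖ S') ∪ (S' ∖ A)` this gives
`c ≤ ε_σ |V ∖ S'|`, and `ε_σ ≤ 1` as soon as `σ ≤ 3/4`.
-/

noncomputable def epsSigma (σ : ℝ) : ℝ := σ / (3 * (1 - σ))

lemma epsSigma_nonneg {σ : ℝ} (h0 : 0 ≤ σ) (h1 : σ ≤ 1) : 0 ≤ epsSigma σ :=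
  div_nonneg h0 (by linarith)

lemma epsSigma_le_one {σ : ℝ} (h : σ ≤ 3 / 4) : epsSigma σ ≤ 1 :=
  (div_le_one (by linarith)).2 (by linarith)

lemma div_three_le_epsSigma {σ : ℝ} (h0 : 0 ≤ σ) (h1 : σ < 1) : σ / 3 ≤ epsSigma σ :=
  div_le_div_of_nonneg_left h0 (by linarith) (by linarith)

lemma le_epsSigma_mul {a m σ : ℝ} (hm : 0 < m) (hσ : 3 * a / m ≤ σ) (h0 : 0 ≤ σ) (h1 : σ < 1) :
    a ≤ epsSigma σ * m := by
  have h3a : 3 * a ≤ σ * m := (div_le_iff₀ hm).1 hσ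
  calc a ≤ σ / 3 * m := by linarith
    _ ≤ epsSigma σ * m := mul_le_mul_of_nonneg_right (div_three_le_epsSigma h0 h1) hm.le

theorem stmt10_general {V : Type*} [Fintype V] (G : SimpleGraph V) (A : Set V)
    (hAproper : A ≠ Set.univ)
    (α : ℝ) (hα : 0 < α) (σ : ℝ)
    (hσ1 : 3 * (A.ncard : ℝ) / (Aᶜ.ncard : ℝ) ≤ σ) (hσ2 : σ ≤ 3 / 4)
    (c : ℝ)
    (S' : Set V)
    (heq : (deltaIn G Set.univ S' : ℝ) / α + ((A \ S').ncard : ℝ) +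
        (σ / (3 * (1 - σ))) * ((S' \ A).ncard : ℝ) = (A.ncard : ℝ) - c) :
    c ≤ (S'.ncard : ℝ) ∧ c ≤ (S'ᶜ.ncard : ℝ) := by
  change _ + _ + epsSigma σ * _ = _ at heq
  have hσ0 : 0 ≤ σ := (by positivity : (0 : ℝ) ≤ 3 * A.ncard / Aᶜ.ncard).trans hσ1
  have hε0 : 0 ≤ epsSigma σ := epsSigma_nonneg hσ0 (by linarith)
  have hcut : 0 ≤ (deltaIn G Set.univ S' : ℝ) / α := by positivity
  have hAc : (0 : ℝ) < Aᶜ.ncard := by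
    exact_mod_cast (Set.ncard_pos Aᶜ.toFinite).2 (Set.nonempty_compl.2 hAproper)
  have hA : (A.ncard : ℝ) ≤ epsSigma σ * Aᶜ.ncard := le_epsSigma_mul hAc hσ1 hσ0 (by linarith)
  have hS : (A.ncard : ℝ) ≤ (A \ S').ncard + S'.ncard := by
    exact_mod_cast Set.ncard_le_ncard_sdiff_add_ncard A S'
  have hSc : (Aᶜ.ncard : ℝ) ≤ (S' \ A).ncard + S'ᶜ.ncard := by
    have := Set.ncard_le_ncard_sdiff_add_ncard Aᶜ S'ᶜ
    rw [compl_sdiff_compl] at this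
    exact_mod_cast this
  have hεS : 0 ≤ epsSigma σ * (S' \ A).ncard := mul_nonneg hε0 (Nat.cast_nonneg _)
  refine ⟨by linarith, ?_⟩
  calc c ≤ epsSigma σ * S'ᶜ.ncard := by linarith [mul_le_mul_of_nonneg_left hSc hε0]
    _ ≤ S'ᶜ.ncard := mul_le_of_le_one_left (Nat.cast_nonneg _) (epsSigma_le_one hσ2)

/-- With `∅ ≠ A ⊊ V`, `4|A| ≤ |V ∖ A|`, `α > 0`, `3|A|/|V∖A| ≤ σ ≤ 3/4`,
`ε_σ = σ/(3(1−σ))` and `c > 0`, if `S'` satisfies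
`δ_G(S')/α + |A∖S'| + ε_σ·|S'∖A| = |A| − c` (a minimum cut of the augmented graph whose
capacity is the max-flow value `|A| − c`), then `|S'| ≥ c` and `|V ∖ S'| ≥ c`. -/
theorem stmt10 {V : Type*} [Fintype V] (G : SimpleGraph V) (A : Set V)
    (hAne : A.Nonempty) (hAproper : A ≠ Set.univ) (hA : 4 * A.ncard ≤ Aᶜ.ncard)
    (α : ℝ) (hα : 0 < α) (σ : ℝ)
    (hσ1 : 3 * (A.ncard : ℝ) / (Aᶜ.ncard : ℝ) ≤ σ) (hσ2 : σ ≤ 3 / 4)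
    (c : ℝ) (hc : 0 < c)
    (S' : Set V)
    (heq : (deltaIn G Set.univ S' : ℝ) / α + ((A \ S').ncard : ℝ) +
        (σ / (3 * (1 - σ))) * ((S' \ A).ncard : ℝ) = (A.ncard : ℝ) - c) :
    c ≤ (S'.ncard : ℝ) ∧ c ≤ (S'ᶜ.ncard : ℝ) :=
  stmt10_general G A hAproper α hα σ hσ1 hσ2 c S' heq
end

section
/- Let G = (V,E) be a finite simple graph, let α > 0, and let T₁, T₂ ⊆ V be disjoint sets with |T₁| = |T₂| = k. If S ⊆ V satisfies δ_G(S)/α + |T₁∖S| + |T₂∩S| < k, then ∅ ≠ S ⊊ V and φ_G(S) < α. -/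
namespace Set

variable {V : Type*}

theorem cast_ncard_sdiff_eq_sub {T : Set V} (hT : T.Finite) (S : Set V) :
    ((T \ S).ncard : ℝ) = T.ncard - (T ∩ S).ncard := by
  rw [← ncard_inter_add_ncard_sdiff_eq_ncard T S hT]
  push_cast
  ring

theorem lt_min_ncard_of_add_ncard_lt [Finite V] {T₁ T₂ S : Set V} {k : ℕ}
    (hT₁ : T₁.ncard = k) (hT₂ : T₂.ncard = k) {c : ℝ}
    (hc : c + (T₁ \ S).ncard + (T₂ ∩ S).ncard < k) :
    c < min (S.ncard : ℝ) ((univ \ S).ncard : ℝ) := by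
  have hT₁S : ((T₁ \ S).ncard : ℝ) = k - (T₁ ∩ S).ncard :=
    hT₁ ▸ cast_ncard_sdiff_eq_sub (toFinite T₁) S
  have hT₂S : ((T₂ \ S).ncard : ℝ) = k - (T₂ ∩ S).ncard :=
    hT₂ ▸ cast_ncard_sdiff_eq_sub (toFinite T₂) S
  have hS : ((T₁ ∩ S).ncard : ℝ) ≤ S.ncard := by
    exact_mod_cast ncard_le_ncard inter_subset_right
  have hSc : ((T₂ \ S).ncard : ℝ) ≤ (univ \ S).ncard := by
    exact_mod_cast ncard_le_ncard (sdiff_subset_sdiff_left (subset_univ T₂))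
  calc c < (T₁ ∩ S).ncard - (T₂ ∩ S).ncard := by linarith
    _ ≤ min (S.ncard : ℝ) ((univ \ S).ncard : ℝ) := by
      apply le_min <;> linarith [((T₁ \ S).ncard.cast_nonneg : (0 : ℝ) ≤ _)]

end Set

theorem stmt11_general {V : Type*} [Fintype V] (G : SimpleGraph V) (α : ℝ) (hα : 0 < α)
    (k : ℕ) (T1 T2 : Set V)
    (hT1 : T1.ncard = k) (hT2 : T2.ncard = k)
    (S : Set V)
    (hcap : (deltaIn G Set.univ S : ℝ) / α + ((T1 \ S).ncard : ℝ) +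
        ((T2 ∩ S).ncard : ℝ) < (k : ℝ)) :
    S.Nonempty ∧ S ≠ Set.univ ∧ phiIn G Set.univ S < α := by
  have hcut := Set.lt_min_ncard_of_add_ncard_lt hT1 hT2 hcap
  have hmin : 0 < min (S.ncard : ℝ) ((Set.univ \ S).ncard : ℝ) :=
    (div_nonneg (Nat.cast_nonneg _) hα.le).trans_lt hcut
  have hS : S.ncard ≠ 0 := by exact_mod_cast (lt_min_iff.1 hmin).1.ne'
  have hSc : (Set.univ \ S).ncard ≠ 0 := by exact_mod_cast (lt_min_iff.1 hmin).2.ne'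
  obtain ⟨x, -, hx⟩ := Set.nonempty_of_ncard_ne_zero hSc
  exact ⟨Set.nonempty_of_ncard_ne_zero hS, fun hS_univ ↦ hx (hS_univ ▸ Set.mem_univ x),
    (div_lt_comm₀ hα hmin).1 hcut⟩

/-- Let `T₁, T₂ ⊆ V` be disjoint with `|T₁| = |T₂| = k`. If `S ⊆ V` satisfies
`δ_G(S)/α + |T₁ ∖ S| + |T₂ ∩ S| < k` (its cut capacity in the flow network is less than `k`),
then `S` is a nonempty proper `α`-sparse cut of `G`. -/
theorem stmt11 {V : Type*} [Fintype V] (G : SimpleGraph V) (α : ℝ) (hα : 0 < α)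
    (k : ℕ) (T1 T2 : Set V) (hdisj : Disjoint T1 T2)
    (hT1 : T1.ncard = k) (hT2 : T2.ncard = k)
    (S : Set V)
    (hcap : (deltaIn G Set.univ S : ℝ) / α + ((T1 \ S).ncard : ℝ) +
        ((T2 ∩ S).ncard : ℝ) < (k : ℝ)) :
    S.Nonempty ∧ S ≠ Set.univ ∧ phiIn G Set.univ S < α :=
  stmt11_general G α hα k T1 T2 hT1 hT2 S hcap
end

section
/- Let G₀ = (V, E₀) be a finite simple graph with expansion φ(G₀) ≥ α for some α > 0, let T > 0, and let G = (V, E) be obtained from G₀ by deleting at most T edges, i.e. E ⊆ E₀ and |E₀∖E| ≤ T. Then every nonempty S ⊆ V with |S| ≤ |V∖S| and δ_G(S) > √(T/α) satisfies φ_G(S) ≥ min{ α/2, 1/(2√(T/α)) }. -/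
/-!
A cut edge of `S` in `G₀` either survives in `G` or is one of the at most `T` deleted edges, so
`α |S| ≤ δ_{G₀}(S) ≤ δ_G(S) + T`. Either `δ_G(S) ≥ α |S| / 2`, or the deleted edges account for
more than half of `α |S|`, whence `|S| < 2T/α = 2 s²` with `s = √(T/α) < δ_G(S)`, and then
`δ_G(S) / |S| > s / (2 s²) = 1 / (2 s)`.
-/

theorem Set.ne_univ_of_ncard_le_ncard_compl {V : Type*} [Finite V] {S : Set V}
    (hne : S.Nonempty) (h : S.ncard ≤ Sᶜ.ncard) : S ≠ Set.univ := by
  rintro rfl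
  have := (Set.ncard_pos (Set.toFinite _)).mpr hne
  simp_all

theorem cutEdgesIn_subset_union_diff {V : Type*} (G₀ G : SimpleGraph V) (U S : Set V) :
    cutEdgesIn G₀ U S ⊆ cutEdgesIn G U S ∪ (G₀.edgeSet \ G.edgeSet) := by
  rintro e ⟨he, u, v, rfl, hu, hvU, hv⟩
  by_cases h : s(u, v) ∈ G.edgeSet
  · exact Or.inl ⟨h, u, v, rfl, hu, hvU, hv⟩
  · exact Or.inr ⟨he, h⟩

theorem deltaIn_le_deltaIn_add_ncard_diff {V : Type*} [Finite V] (G₀ G : SimpleGraph V)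
    (U S : Set V) :
    deltaIn G₀ U S ≤ deltaIn G U S + (G₀.edgeSet \ G.edgeSet).ncard :=
  (Set.ncard_le_ncard (cutEdgesIn_subset_union_diff G₀ G U S)).trans (Set.ncard_union_le _ _)

theorem phiIn_univ_of_ncard_le_ncard_compl {V : Type*} (G : SimpleGraph V) {S : Set V}
    (h : S.ncard ≤ Sᶜ.ncard) :
    phiIn G Set.univ S = deltaIn G Set.univ S / S.ncard := by
  rw [phiIn, ← Set.compl_eq_univ_sdiff, min_eq_left (by exact_mod_cast h)]

theorem min_half_le_div_of_mul_le_add {a n d T : ℝ} (hn : 0 < n) (hlower : a * n ≤ d + T)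
    (hd : √(T / a) < d) :
    min (a / 2) (1 / (2 * √(T / a))) ≤ d / n := by
  by_cases hhalf : a / 2 ≤ d / n
  · exact (min_le_left _ _).trans hhalf
  refine (min_le_right _ _).trans ?_
  rw [not_le, div_lt_iff₀ hn] at hhalf
  set s := √(T / a)
  have hs0 : 0 ≤ s := Real.sqrt_nonneg _
  have ha : 0 < a := by nlinarith
  have hT : 0 < T := by nlinarith
  have hs : s ^ 2 = T / a := Real.sq_sqrt (div_pos hT ha).le
  have hn_lt : n < 2 * s ^ 2 := by
    rw [hs, ← mul_div_assoc, lt_div_iff₀ ha]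
    nlinarith
  rw [div_le_div_iff₀ (by positivity) hn]
  nlinarith

theorem stmt15_general {V : Type*} [Fintype V] (G0 : SimpleGraph V) (α : ℝ)
    (hexp : ∀ S : Set V, S.Nonempty → S ≠ Set.univ → α ≤ phiIn G0 Set.univ S)
    (T : ℝ) (G : SimpleGraph V)
    (hdel : ((G0.edgeSet \ G.edgeSet).ncard : ℝ) ≤ T)
    (S : Set V) (hSne : S.Nonempty) (hSsize : S.ncard ≤ Sᶜ.ncard)
    (hScut : Real.sqrt (T / α) < (deltaIn G Set.univ S : ℝ)) :
    min (α / 2) (1 / (2 * Real.sqrt (T / α))) ≤ phiIn G Set.univ S := by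
  have hS : (0 : ℝ) < S.ncard := by exact_mod_cast (Set.ncard_pos (Set.toFinite S)).mpr hSne
  have hexpS := hexp S hSne (Set.ne_univ_of_ncard_le_ncard_compl hSne hSsize)
  rw [phiIn_univ_of_ncard_le_ncard_compl G0 hSsize, le_div_iff₀ hS] at hexpS
  have hcut : (deltaIn G0 Set.univ S : ℝ) ≤
      deltaIn G Set.univ S + (G0.edgeSet \ G.edgeSet).ncard := by
    exact_mod_cast deltaIn_le_deltaIn_add_ncard_diff G0 G Set.univ S
  rw [phiIn_univ_of_ncard_le_ncard_compl G hSsize]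
  exact min_half_le_div_of_mul_le_add hS (by linarith) hScut

/-- Let `G₀` have expansion `φ(G₀) ≥ α > 0`, let `T > 0`, and let `G` be
obtained from `G₀` by deleting at most `T` edges. Then every nonempty `S` with `|S| ≤ |V ∖ S|`
and `δ_G(S) > √(T/α)` satisfies `φ_G(S) ≥ min (α/2) (1/(2√(T/α)))`. -/
theorem stmt15 {V : Type*} [Fintype V] (G0 : SimpleGraph V) (α : ℝ) (hα : 0 < α)
    (hexp : ∀ S : Set V, S.Nonempty → S ≠ Set.univ → α ≤ phiIn G0 Set.univ S)
    (T : ℝ) (hT : 0 < T) (G : SimpleGraph V)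
    (hsub : G.edgeSet ⊆ G0.edgeSet)
    (hdel : ((G0.edgeSet \ G.edgeSet).ncard : ℝ) ≤ T)
    (S : Set V) (hSne : S.Nonempty) (hSsize : S.ncard ≤ Sᶜ.ncard)
    (hScut : Real.sqrt (T / α) < (deltaIn G Set.univ S : ℝ)) :
    min (α / 2) (1 / (2 * Real.sqrt (T / α))) ≤ phiIn G Set.univ S :=
  stmt15_general G0 α hexp T G hdel S hSne hSsize hScut
end

section
/- Let G = (V,E) be a finite simple graph whose edge set is partitioned as E = E^d ⊔ E^s. Let F be a spanning forest of G and let F^d ⊆ F be a spanning forest of the graph G^d = (V, E^d). Let e ∈ F∖F^d be an edge with endpoints u and v. Then every edge e' ∈ E∖{e} having one endpoint in the connected component of u in (V, F∖{e}) and its other endpoint in the connected component of v in (V, F∖{e}) belongs to E^s. -/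
/-- `F` is a spanning forest of the graph `G`: a set of edges of `G` which is acyclic and in
which any two vertices are connected iff they are connected in `G`. -/
def IsSpanningForest {V : Type*} (G : SimpleGraph V) (F : Set (Sym2 V)) : Prop :=
  F ⊆ G.edgeSet ∧ (SimpleGraph.fromEdgeSet F).IsAcyclic ∧
    ∀ u v : V, (SimpleGraph.fromEdgeSet F).Reachable u v ↔ G.Reachable u v

/-- Let `E = E^d ⊔ E^s` be a partition of the edges of `G`, let `F` be a
spanning forest of `G` and `F^d ⊆ F` a spanning forest of `G^d = (V, E^d)`. If `e = s(u,v)`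
is an edge of `F ∖ F^d`, then every replacement edge `e' ∈ E ∖ {e}` — i.e. every edge with one
endpoint in the component of `u` and the other in the component of `v` of `(V, F ∖ {e})` —
belongs to `E^s`. -/
theorem stmt18 {V : Type*} [Fintype V] (G : SimpleGraph V) (Ed Es : Set (Sym2 V))
    (hunion : G.edgeSet = Ed ∪ Es) (hdisj : Disjoint Ed Es)
    (F : Set (Sym2 V)) (hF : IsSpanningForest G F)
    (Fd : Set (Sym2 V)) (hFdF : Fd ⊆ F)
    (hFd : IsSpanningForest (SimpleGraph.fromEdgeSet Ed) Fd)
    (u v : V) (he : s(u, v) ∈ F \ Fd)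
    (e' : Sym2 V) (he'E : e' ∈ G.edgeSet) (hne : e' ≠ s(u, v))
    (x y : V) (hxy : e' = s(x, y))
    (hx : (SimpleGraph.fromEdgeSet (F \ {s(u, v)})).Reachable u x)
    (hy : (SimpleGraph.fromEdgeSet (F \ {s(u, v)})).Reachable v y) :
    e' ∈ Es := by
  have hmem : e' ∈ Ed ∪ Es := hunion ▸ he'E
  rcases hmem with hEd | hEs
  · exfalso
    -- x and y are adjacent in fromEdgeSet Ed
    have hxyG : G.Adj x y := by
      rw [← SimpleGraph.mem_edgeSet, ← hxy]; exact he'E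
    have hxney : x ≠ y := hxyG.ne
    have hadj : (SimpleGraph.fromEdgeSet Ed).Adj x y := by
      rw [SimpleGraph.fromEdgeSet_adj]
      exact ⟨hxy ▸ hEd, hxney⟩
    -- hence reachable in Fd
    have hrFd : (SimpleGraph.fromEdgeSet Fd).Reachable x y :=
      (hFd.2.2 x y).mpr hadj.reachable
    -- Fd ⊆ F \ {s(u,v)}
    have hsub : Fd ⊆ F \ {s(u, v)} := fun a ha =>
      ⟨hFdF ha, fun h => he.2 (h ▸ ha)⟩
    have hrxy : (SimpleGraph.fromEdgeSet (F \ {s(u, v)})).Reachable x y :=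
      hrFd.mono (SimpleGraph.fromEdgeSet_mono hsub)
    -- so u and v are reachable avoiding s(u,v)
    have hruv : (SimpleGraph.fromEdgeSet (F \ {s(u, v)})).Reachable u v :=
      (hx.trans hrxy).trans hy.symm
    -- but F is acyclic and s(u,v) ∈ F: s(u,v) is a bridge
    have huvG : G.Adj u v := (SimpleGraph.mem_edgeSet G).mp (hF.1 he.1)
    have hadjF : (SimpleGraph.fromEdgeSet F).Adj u v := by
      rw [SimpleGraph.fromEdgeSet_adj]; exact ⟨he.1, huvG.ne⟩
    have hbridge := (SimpleGraph.isAcyclic_iff_forall_adj_isBridge.mp hF.2.1) hadjF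
    rw [SimpleGraph.isBridge_iff] at hbridge
    apply hbridge
    refine hruv.mono (fun a b hab => ?_)
    rw [SimpleGraph.fromEdgeSet_adj] at hab
    rw [SimpleGraph.deleteEdges, SimpleGraph.sdiff_adj]
    refine ⟨?_, ?_⟩
    · rw [SimpleGraph.fromEdgeSet_adj]; exact ⟨hab.1.1, hab.2⟩
    · rw [SimpleGraph.fromEdgeSet_adj]
      rintro ⟨h1, -⟩; exact hab.1.2 h1
  · exact hEs
end
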